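/- Let A and B be irreducible non-permutation {0,1}-matrices, and let h: X_A → X_B be a homeomorphism giving rise to a continuous orbit equivalence with continuous functions k_1, l_1: X_A → ℤ_{≥0} and cocycle function c_1 = l_1 − k_1. If x ∈ X_A and r, s ∈ ℤ_{≥0} satisfy σ_A^r(x) = σ_A^s(x) and r − s > 0, then Σ_{i=0}^{r−s−1} c_1(σ_A^{s+i}(x)) > 0. -/

import Mathlib

/-- The group structure on self-homeomorphisms, with `(f * g) x = f (g x)`. -/
instance homeoGroup {X : Type*} [TopologicalSpace X] : Group (X ≃ₜ X) where
  mul f g := g.trans f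
  one := Homeomorph.refl X
  inv := Homeomorph.symm
  mul_assoc _ _ _ := Homeomorph.ext fun _ => rfl
  one_mul _ := Homeomorph.ext fun _ => rfl
  mul_one _ := Homeomorph.ext fun _ => rfl
  inv_mul_cancel f := Homeomorph.ext f.symm_apply_apply

private lemma iter_swap {α : Type*} (f : α → α) (a b : ℕ) (x : α) :
    f^[a] (f^[b] x) = f^[b] (f^[a] x) := by
  rw [← Function.iterate_add_apply, ← Function.iterate_add_apply, add_comm]

/-- The one-sided topological Markov shift space `X_A` of a 0-1 matrix `A`. -/
def MarkovShift {N : ℕ} (A : Matrix (Fin N) (Fin N) ℕ) : Set (ℕ → Fin N) :=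
  {x | ∀ n, A (x n) (x (n + 1)) = 1}

/-- The shift transformation `σ_A` on `X_A`. -/
def shift {N : ℕ} (A : Matrix (Fin N) (Fin N) ℕ) :
    ↥(MarkovShift A) → ↥(MarkovShift A) :=
  fun x => ⟨fun n => x.1 (n + 1), fun n => x.2 (n + 1)⟩

/-- `A` is a {0,1}-matrix which is irreducible and not a permutation matrix. -/
structure IsIrredNonPerm {N : ℕ} (A : Matrix (Fin N) (Fin N) ℕ) : Prop where
  zero_one : ∀ i j, A i j = 0 ∨ A i j = 1
  irreducible : ∀ i j, ∃ n, 1 ≤ n ∧ 0 < (A ^ n) i j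
  not_perm : ¬ ∃ e : Equiv.Perm (Fin N), ∀ i j, A i j = if e i = j then 1 else 0

/-- The continuous full group `Γ_A`. -/
def fullGroup {N : ℕ} (A : Matrix (Fin N) (Fin N) ℕ) :
    Subgroup (↥(MarkovShift A) ≃ₜ ↥(MarkovShift A)) where
  carrier := {τ | ∃ k l : ↥(MarkovShift A) → ℕ, Continuous k ∧ Continuous l ∧
      ∀ x, (shift A)^[k x] (τ x) = (shift A)^[l x] x}
  one_mem' := ⟨fun _ => 0, fun _ => 0, continuous_const, continuous_const, fun _ => rfl⟩
  mul_mem' := by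
    rintro τ₁ τ₂ ⟨k, l, hk, hl, hrel⟩ ⟨k', l', hk', hl', hrel'⟩
    refine ⟨fun x => k (τ₂ x) + k' x, fun x => l (τ₂ x) + l' x,
      (hk.comp τ₂.continuous).add hk', (hl.comp τ₂.continuous).add hl', fun x => ?_⟩
    show (shift A)^[k (τ₂ x) + k' x] (τ₁ (τ₂ x)) = (shift A)^[l (τ₂ x) + l' x] x
    rw [add_comm (k (τ₂ x)) (k' x), Function.iterate_add_apply, hrel (τ₂ x), iter_swap,
      hrel' x, ← Function.iterate_add_apply]
  inv_mem' := by
    rintro τ ⟨k, l, hk, hl, hrel⟩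
    refine ⟨fun x => l (τ.symm x), fun x => k (τ.symm x),
      hl.comp τ.symm.continuous, hk.comp τ.symm.continuous, fun x => ?_⟩
    show (shift A)^[l (τ.symm x)] (τ.symm x) = (shift A)^[k (τ.symm x)] x
    have h0 := hrel (τ.symm x)
    rw [τ.apply_symm_apply] at h0
    exact h0.symm

/-- The subgroup `Γ_A^{AF}` of the continuous full group. -/
def afGroup {N : ℕ} (A : Matrix (Fin N) (Fin N) ℕ) :
    Subgroup (↥(MarkovShift A) ≃ₜ ↥(MarkovShift A)) where
  carrier := {τ | ∃ K : ℕ, ∀ x, (shift A)^[K] (τ x) = (shift A)^[K] x}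
  one_mem' := ⟨0, fun _ => rfl⟩
  mul_mem' := by
    rintro τ₁ τ₂ ⟨K, hK⟩ ⟨K', hK'⟩
    refine ⟨K' + K, fun x => ?_⟩
    show (shift A)^[K' + K] (τ₁ (τ₂ x)) = (shift A)^[K' + K] x
    rw [Function.iterate_add_apply, hK (τ₂ x), iter_swap, hK' x, iter_swap,
      ← Function.iterate_add_apply]
  inv_mem' := by
    rintro τ ⟨K, hK⟩
    refine ⟨K, fun x => ?_⟩
    show (shift A)^[K] (τ.symm x) = (shift A)^[K] x
    have h0 := hK (τ.symm x)
    rw [τ.apply_symm_apply] at h0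
    exact h0.symm

/-- `h`, together with `k₁, l₁, k₂, l₂`, witnesses a continuous orbit equivalence
between `(X_A, σ_A)` and `(X_B, σ_B)`. -/
def COEWitness {N M : ℕ} (A : Matrix (Fin N) (Fin N) ℕ) (B : Matrix (Fin M) (Fin M) ℕ)
    (h : ↥(MarkovShift A) ≃ₜ ↥(MarkovShift B)) (k₁ l₁ : ↥(MarkovShift A) → ℕ)
    (k₂ l₂ : ↥(MarkovShift B) → ℕ) : Prop :=
  Continuous k₁ ∧ Continuous l₁ ∧ Continuous k₂ ∧ Continuous l₂ ∧
  (∀ x, (shift B)^[k₁ x] (h (shift A x)) = (shift B)^[l₁ x] (h x)) ∧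
  (∀ y, (shift A)^[k₂ y] (h.symm (shift B y)) = (shift A)^[l₂ y] (h.symm y))

/-- `(X_A, σ_A)` and `(X_B, σ_B)` are continuously orbit equivalent. -/
def COE {N M : ℕ} (A : Matrix (Fin N) (Fin N) ℕ) (B : Matrix (Fin M) (Fin M) ℕ) : Prop :=
  ∃ h k₁ l₁ k₂ l₂, COEWitness A B h k₁ l₁ k₂ l₂

/-- The extra uniformity condition on a homeomorphism `h : X_A → X_B`:
elements of `Γ_A^{AF}` and `Γ_B^{AF}` are uniformly intertwined by `h`. -/
def UniformWitness {N M : ℕ} (A : Matrix (Fin N) (Fin N) ℕ) (B : Matrix (Fin M) (Fin M) ℕ)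
    (h : ↥(MarkovShift A) ≃ₜ ↥(MarkovShift B)) : Prop :=
  (∀ τ₁ ∈ afGroup A, ∃ K : ℕ, ∀ x, (shift B)^[K] (h (τ₁ x)) = (shift B)^[K] (h x)) ∧
  (∀ τ₂ ∈ afGroup B, ∃ K : ℕ, ∀ y, (shift A)^[K] (h.symm (τ₂ y)) = (shift A)^[K] (h.symm y))

/-- `(X_A, σ_A)` and `(X_B, σ_B)` are uniformly continuously orbit equivalent. -/
def UCOE {N M : ℕ} (A : Matrix (Fin N) (Fin N) ℕ) (B : Matrix (Fin M) (Fin M) ℕ) : Prop :=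
  ∃ h k₁ l₁ k₂ l₂, COEWitness A B h k₁ l₁ k₂ l₂ ∧ UniformWitness A B h

/-- `(X_A, σ_A)` and `(X_B, σ_B)` are uniformly orbit equivalent. -/
def UOE {N M : ℕ} (A : Matrix (Fin N) (Fin N) ℕ) (B : Matrix (Fin M) (Fin M) ℕ) : Prop :=
  ∃ h : ↥(MarkovShift A) ≃ₜ ↥(MarkovShift B), UniformWitness A B h

/-- `(X_A, σ_A)` and `(X_B, σ_B)` are eventually one-sided conjugate. -/
def EventuallyConjugate {N M : ℕ} (A : Matrix (Fin N) (Fin N) ℕ)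
    (B : Matrix (Fin M) (Fin M) ℕ) : Prop :=
  ∃ (h : ↥(MarkovShift A) ≃ₜ ↥(MarkovShift B)) (K₁ K₂ : ℕ),
    (∀ x, (shift B)^[K₁] (h (shift A x)) = (shift B)^[K₁ + 1] (h x)) ∧
    (∀ y, (shift A)^[K₂] (h.symm (shift B y)) = (shift A)^[K₂ + 1] (h.symm y))

/-- Conjugation of a self-homeomorphism of `X_A` by `h : X_A ≃ₜ X_B`,
i.e. `h ∘ τ ∘ h⁻¹`. -/
def conjHomeo {N M : ℕ} {A : Matrix (Fin N) (Fin N) ℕ} {B : Matrix (Fin M) (Fin M) ℕ}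
    (h : ↥(MarkovShift A) ≃ₜ ↥(MarkovShift B))
    (τ : ↥(MarkovShift A) ≃ₜ ↥(MarkovShift A)) : ↥(MarkovShift B) ≃ₜ ↥(MarkovShift B) :=
  (h.symm.trans τ).trans h

/-- A point `x ∈ X_A` is eventually periodic. -/
def EventuallyPeriodicPt {N : ℕ} (A : Matrix (Fin N) (Fin N) ℕ)
    (x : ↥(MarkovShift A)) : Prop :=
  ∃ r s : ℕ, s < r ∧ (shift A)^[r] x = (shift A)^[s] x

/-- `f^k(x) = Σ_{i=0}^{k-1} f(σ_A^i(x))`. -/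
def cocycleSum {N : ℕ} (A : Matrix (Fin N) (Fin N) ℕ) (f : ↥(MarkovShift A) → ℕ)
    (k : ℕ) (x : ↥(MarkovShift A)) : ℕ :=
  ∑ i ∈ Finset.range k, f ((shift A)^[i] x)

/-!
Put `y = σ_A^s x`, so that `σ_A^p y = y` with `p = r - s`, and let `K` and `L` be the sums of
`k₁` and `l₁` along the period of `y`; the claim is `K < L`. Iterating the orbit relation over a
period gives `σ_B^K h(σ_A^p u) = σ_B^L h(u)` for every `u` close enough to `y`.

Suppose `K = L + e`. For `u` in a small cylinder around `y` let `F n` be `u` preceded by `n`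
copies of the period word `y₀ … y_{p-1}`. Then `σ_A^p (F (n + 1)) = F n` and `F n → y`, so
`σ_B^{L + n e} h(u) = σ_B^L h(F n)`, whose first `e` coordinates eventually agree with those of
`σ_B^L h(y) = σ_B^{L + n e} h(y)`. Hence `h(u)` and `h(y)` agree beyond a position that does not
depend on `u`: the injective map `h` sends the cylinder, which is infinite because `A` is
irreducible and not a permutation matrix, into a finite set.
-/

open PiNat

lemma Function.iterate_sum_of_iterate_eq {α β : Type*} {f : α → α} {g : β → β} {φ : α → β}
    {k l : α → ℕ} (hrel : ∀ x, g^[k x] (φ (f x)) = g^[l x] (φ x)) (n : ℕ) (x : α) :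
    g^[∑ i ∈ Finset.range n, k (f^[i] x)] (φ (f^[n] x)) =
      g^[∑ i ∈ Finset.range n, l (f^[i] x)] (φ x) := by
  induction n with
  | zero => rfl
  | succ n ih =>
    rw [Finset.sum_range_succ, Finset.sum_range_succ, Function.iterate_add_apply,
      Function.iterate_succ_apply', hrel, ← Function.iterate_add_apply,
      add_comm (∑ i ∈ Finset.range n, k _), Function.iterate_add_apply, ih,
      ← Function.iterate_add_apply, add_comm (l _)]

lemma Function.iterate_add_mul_eq_of_iterate_add_eq {β : Type*} {g : β → β} {z : ℕ → β}
    {a e : ℕ} (h : ∀ n, g^[a + e] (z n) = g^[a] (z (n + 1))) (j : ℕ) :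
    g^[a + j * e] (z 0) = g^[a] (z j) := by
  induction j with
  | zero => rw [zero_mul, add_zero]
  | succ j ih =>
    rw [Nat.succ_mul, ← add_assoc, add_comm _ e, Function.iterate_add_apply, ih,
      ← Function.iterate_add_apply, add_comm, h]

lemma Matrix.exists_ne_zero_of_mul_apply_ne_zero {n α : Type*} [Fintype n]
    [NonUnitalNonAssocSemiring α] {P Q : Matrix n n α} {i j : n} (h : (P * Q) i j ≠ 0) :
    ∃ k, P i k ≠ 0 ∧ Q k j ≠ 0 := by
  rw [Matrix.mul_apply] at h
  obtain ⟨k, -, hk⟩ := Finset.exists_ne_zero_of_sum_ne_zero h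
  exact ⟨k, left_ne_zero_of_mul hk, right_ne_zero_of_mul hk⟩

section Sequences

variable {β : Type*}

lemma exists_forall_mem_cylinder_eq_of_continuous [TopologicalSpace β] [DiscreteTopology β]
    {S : Set (ℕ → β)} {α : Type*} [TopologicalSpace α] [DiscreteTopology α] {γ : S → α}
    (hγ : Continuous γ) (w : S) : ∃ t, ∀ u : S, u.1 ∈ cylinder w.1 t → γ u = γ w := by
  obtain ⟨V, hV, hγV⟩ := isOpen_induced_iff.1 ((isOpen_discrete {γ w}).preimage hγ)
  have hwV : w.1 ∈ V := by
    change w ∈ Subtype.val ⁻¹' V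
    rw [hγV]
    rfl
  obtain ⟨_, ⟨x, t, rfl⟩, hw, hsub⟩ :=
    (isTopologicalBasis_cylinders fun _ => β).exists_subset_of_mem_open hwV hV
  refine ⟨t, fun u hu => ?_⟩
  rw [mem_cylinder_iff_eq.1 hw] at hu
  change u ∈ γ ⁻¹' {γ w}
  rw [← hγV]
  exact hsub hu

lemma finite_setOf_forall_le_eq [Finite β] (z : ℕ → β) (T : ℕ) :
    {ξ : ℕ → β | ∀ q, T ≤ q → ξ q = z q}.Finite := by
  refine Set.Finite.of_finite_image (f := fun ξ (i : Fin T) => ξ i) (Set.toFinite _) ?_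
  intro ξ hξ ξ' hξ' h
  funext q
  by_cases hq : q < T
  · exact congrFun h ⟨q, hq⟩
  · rw [hξ q (not_lt.1 hq), hξ' q (not_lt.1 hq)]

lemma eq_of_le_of_forall_shift_eq {ζ : ℕ → ℕ → β} {z : ℕ → β} {a e : ℕ} (J : ℕ → ℕ)
    (hζ : ∀ j i, ζ 0 (i + (a + j * e)) = ζ j (i + a))
    (hz : ∀ j i, z (i + (a + j * e)) = z (i + a))
    (hJ : ∀ c j, J c ≤ j → ζ j ∈ cylinder z c) :
    ∀ q, a + J (a + e) * e ≤ q → ζ 0 q = z q := by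
  intro q hq
  rcases Nat.eq_zero_or_pos e with rfl | he
  · have := hζ (J (q + 1)) (q - a)
    rw [mul_zero, add_zero, Nat.sub_add_cancel (by omega)] at this
    rw [this]
    exact hJ (q + 1) _ le_rfl q q.lt_succ_self
  · obtain ⟨j, i, hi, rfl⟩ : ∃ j i, i < e ∧ q = i + (a + j * e) :=
      ⟨(q - a) / e, (q - a) % e, Nat.mod_lt _ he, by
        have := Nat.div_add_mod (q - a) e
        rw [mul_comm] at this
        omega⟩
    have hj : J (a + e) * e < (j + 1) * e := by rw [Nat.succ_mul]; omega
    replace hj := Nat.lt_succ_iff.1 (Nat.lt_of_mul_lt_mul_right hj)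
    rw [hζ, hz, hJ (a + e) j hj (i + a) (by omega)]

end Sequences

namespace IsIrredNonPerm

variable {N : ℕ} {A : Matrix (Fin N) (Fin N) ℕ}

lemma eq_one_of_ne_zero (hA : IsIrredNonPerm A) {i j : Fin N} (h : A i j ≠ 0) : A i j = 1 :=
  (hA.zero_one i j).resolve_left h

lemma exists_succ (hA : IsIrredNonPerm A) (a : Fin N) : ∃ b, A a b = 1 := by
  obtain ⟨n, hn, hpos⟩ := hA.irreducible a a
  obtain ⟨m, rfl⟩ := Nat.exists_eq_add_of_le' hn
  rw [pow_succ'] at hpos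
  obtain ⟨b, hab, -⟩ := Matrix.exists_ne_zero_of_mul_apply_ne_zero hpos.ne'
  exact ⟨b, hA.eq_one_of_ne_zero hab⟩

lemma exists_pred (hA : IsIrredNonPerm A) (b : Fin N) : ∃ a, A a b = 1 := by
  obtain ⟨n, hn, hpos⟩ := hA.irreducible b b
  obtain ⟨m, rfl⟩ := Nat.exists_eq_add_of_le' hn
  rw [pow_succ] at hpos
  obtain ⟨a, -, hab⟩ := Matrix.exists_ne_zero_of_mul_apply_ne_zero hpos.ne'
  exact ⟨a, hA.eq_one_of_ne_zero hab⟩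

end IsIrredNonPerm

namespace MarkovShift

variable {N M : ℕ} {A : Matrix (Fin N) (Fin N) ℕ} {B : Matrix (Fin M) (Fin M) ℕ}

lemma shift_iterate_apply (u : MarkovShift A) (n i : ℕ) :
    ((shift A)^[n] u).1 i = u.1 (i + n) := by
  induction n generalizing u with
  | zero => rfl
  | succ n ih => rw [Function.iterate_succ_apply, ih]; rfl

lemma continuous_shift : Continuous (shift A) :=
  continuous_induced_rng.2 <|
    continuous_pi fun n => (continuous_apply (n + 1)).comp continuous_subtype_val

lemma continuous_cocycleSum {f : MarkovShift A → ℕ} (hf : Continuous f) (n : ℕ) :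
    Continuous (cocycleSum A f n) :=
  continuous_finsetSum _ fun i _ => hf.comp (continuous_shift.iterate i)

lemma apply_add_mul_of_isPeriodicPt {y : MarkovShift A} {p : ℕ}
    (hy : Function.IsPeriodicPt (shift A) p y) (n i : ℕ) : y.1 (i + n * p) = y.1 i := by
  rw [← shift_iterate_apply, mul_comm, hy.mul_const n]

def cons (a : Fin N) (v : MarkovShift A) (ha : A a (v.1 0) = 1) : MarkovShift A :=
  ⟨fun n => match n with | 0 => a | m + 1 => v.1 m, fun n => by
    cases n with
    | zero => exact ha
    | succ m => exact v.2 m⟩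

lemma shift_cons (a : Fin N) (v : MarkovShift A) (ha : A a (v.1 0) = 1) :
    shift A (cons a v ha) = v := rfl

/-- The point `w₀ w₁ … w_{c-1} u₀ u₁ …`; the compatibility condition is `u₀ = w_c`. -/
def splice (w : MarkovShift A) (c : ℕ) (u : MarkovShift A) (hu : u.1 0 = w.1 c) :
    MarkovShift A :=
  ⟨fun q => if q < c then w.1 q else u.1 (q - c), fun q => by
    by_cases h₁ : q + 1 < c
    · simp only [if_pos h₁, if_pos (q.lt_succ_self.trans h₁)]
      exact w.2 q
    by_cases h₂ : q < c
    · obtain rfl : c = q + 1 := by omega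
      simp only [if_pos h₂, lt_irrefl, if_false, Nat.sub_self, hu]
      exact w.2 q
    · simp only [if_neg h₁, if_neg h₂, Nat.sub_add_comm (not_lt.mp h₂)]
      exact u.2 (q - c)⟩

lemma splice_apply (w : MarkovShift A) (c : ℕ) (u : MarkovShift A) (hu : u.1 0 = w.1 c)
    (q : ℕ) : (splice w c u hu).1 q = if q < c then w.1 q else u.1 (q - c) := rfl

lemma splice_mem_cylinder (w : MarkovShift A) (c : ℕ) (u : MarkovShift A)
    (hu : u.1 0 = w.1 c) : (splice w c u hu).1 ∈ cylinder w.1 c := fun _ hq => if_pos hq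

lemma shift_iterate_splice (w : MarkovShift A) (c : ℕ) (u : MarkovShift A)
    (hu : u.1 0 = w.1 c) : (shift A)^[c] (splice w c u hu) = u :=
  Subtype.ext <| funext fun q => by
    rw [shift_iterate_apply, splice_apply, if_neg (by omega), Nat.add_sub_cancel]

section Periodic

variable {y : MarkovShift A} {p : ℕ}

lemma apply_zero_eq_apply_mul_of_isPeriodicPt (hy : Function.IsPeriodicPt (shift A) p y)
    {u : MarkovShift A} (hu : u.1 0 = y.1 0) (n : ℕ) : u.1 0 = y.1 (n * p) := by
  rw [hu, ← apply_add_mul_of_isPeriodicPt hy n 0, zero_add]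

lemma shift_iterate_splice_succ_mul (hy : Function.IsPeriodicPt (shift A) p y)
    {u : MarkovShift A} (n : ℕ) (h₁ : u.1 0 = y.1 ((n + 1) * p)) (h₂ : u.1 0 = y.1 (n * p)) :
    (shift A)^[p] (splice y ((n + 1) * p) u h₁) = splice y (n * p) u h₂ :=
  Subtype.ext <| funext fun q => by
    rw [shift_iterate_apply, splice_apply, splice_apply, Nat.succ_mul]
    by_cases hq : q < n * p
    · rw [if_pos (by omega), if_pos hq, ← one_mul p, apply_add_mul_of_isPeriodicPt hy]
    · rw [if_neg (by omega), if_neg hq, show q + p - (n * p + p) = q - n * p by omega]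

lemma splice_mul_mem_cylinder (hy : Function.IsPeriodicPt (shift A) p y)
    {u : MarkovShift A} {m : ℕ} (hu : u.1 ∈ cylinder y.1 m) (n : ℕ)
    (h : u.1 0 = y.1 (n * p)) : (splice y (n * p) u h).1 ∈ cylinder y.1 m := fun q hq => by
  rw [splice_apply]
  split_ifs with hqn
  · rfl
  · rw [hu (q - n * p) (by omega), ← apply_add_mul_of_isPeriodicPt hy n,
      Nat.sub_add_cancel (not_lt.1 hqn)]

end Periodic

lemma exists_apply_zero_eq (hA : IsIrredNonPerm A) (a : Fin N) :
    ∃ v : MarkovShift A, v.1 0 = a := by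
  choose f hf using hA.exists_succ
  refine ⟨⟨fun n => f^[n] a, fun n => ?_⟩, rfl⟩
  show A (f^[n] a) (f^[n + 1] a) = 1
  rw [Function.iterate_succ_apply']
  exact hf _

/-- If `X_A` were finite, `σ_A` would be a bijection, forcing every symbol to have a unique
predecessor; then `A` would be a permutation matrix. -/
lemma infinite (hA : IsIrredNonPerm A) : Infinite (MarkovShift A) := by
  by_contra hfin
  rw [not_infinite_iff_finite] at hfin
  have hinj : Function.Injective (shift A) := Finite.injective_iff_surjective.2 fun v =>
    let ⟨a, ha⟩ := hA.exists_pred (v.1 0)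
    ⟨cons a v ha, shift_cons a v ha⟩
  have hpred_unique : ∀ {a a' c : Fin N}, A a c = 1 → A a' c = 1 → a = a' := by
    intro a a' c ha ha'
    obtain ⟨v, rfl⟩ := exists_apply_zero_eq hA c
    exact congrArg (fun u : MarkovShift A => u.1 0)
      (hinj ((shift_cons a v ha).trans (shift_cons a' v ha').symm))
  choose g hg using hA.exists_pred
  have hg_surj : Function.Surjective g := fun a =>
    let ⟨b, hb⟩ := hA.exists_succ a
    ⟨b, hpred_unique (hg b) hb⟩
  let e := Equiv.ofBijective g ⟨Finite.injective_iff_surjective.2 hg_surj, hg_surj⟩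
  refine hA.not_perm ⟨e.symm, fun i j => ?_⟩
  split_ifs with hij <;> rw [Equiv.symm_apply_eq] at hij
  · rw [hij]
    exact hg j
  · exact (hA.zero_one i j).resolve_right fun h₁ => hij (hpred_unique h₁ (hg j))

lemma infinite_setOf_apply_zero_eq_of_pow_pos (hz : ∀ i j, A i j = 0 ∨ A i j = 1)
    {n : ℕ} {a b : Fin N} (hab : 0 < (A ^ n) a b)
    (hb : {v : MarkovShift A | v.1 0 = b}.Infinite) :
    {v : MarkovShift A | v.1 0 = a}.Infinite := by
  induction n generalizing a with
  | zero =>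
    obtain rfl : a = b := by
      by_contra hne
      simp [Matrix.one_apply_ne hne] at hab
    exact hb
  | succ n ih =>
    rw [pow_succ'] at hab
    obtain ⟨k, hak, hkb⟩ := Matrix.exists_ne_zero_of_mul_apply_ne_zero hab.ne'
    have hak : A a k = 1 := (hz a k).resolve_left hak
    have := (ih (Nat.pos_of_ne_zero hkb)).to_subtype
    refine Set.infinite_of_injective_forall_mem
      (f := fun v : {v : MarkovShift A | v.1 0 = k} => cons a v.1 (v.2.symm ▸ hak))
      (fun v v' hvv => Subtype.ext ?_) fun _ => rfl
    simpa only [shift_cons] using congrArg (shift A) hvv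

lemma infinite_setOf_apply_zero_eq (hA : IsIrredNonPerm A) (a : Fin N) :
    {v : MarkovShift A | v.1 0 = a}.Infinite := by
  have := infinite hA
  obtain ⟨b, hb⟩ : ∃ b, {v : MarkovShift A | v.1 0 = b}.Infinite := by
    by_contra! hfin
    refine Set.infinite_univ (Set.Finite.subset (Set.finite_iUnion hfin) fun v _ => ?_)
    exact Set.mem_iUnion.2 ⟨v.1 0, rfl⟩
  obtain ⟨n, -, hn⟩ := hA.irreducible a b
  exact infinite_setOf_apply_zero_eq_of_pow_pos hA.zero_one hn hb

lemma infinite_setOf_mem_cylinder (hA : IsIrredNonPerm A) (w : MarkovShift A) (m : ℕ) :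
    {u : MarkovShift A | u.1 ∈ cylinder w.1 m}.Infinite := by
  have := (infinite_setOf_apply_zero_eq hA (w.1 m)).to_subtype
  refine Set.infinite_of_injective_forall_mem
    (f := fun v : {v : MarkovShift A | v.1 0 = w.1 m} => splice w m v.1 v.2)
    (fun v v' hvv => Subtype.ext ?_) fun v => splice_mem_cylinder w m v.1 v.2
  simpa only [shift_iterate_splice] using congrArg (shift A)^[m] hvv

lemma exists_forall_mem_cylinder_mem_cylinder {φ : MarkovShift A → MarkovShift B}
    (hφ : Continuous φ) (w : MarkovShift A) (c : ℕ) :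
    ∃ t, ∀ u : MarkovShift A, u.1 ∈ cylinder w.1 t → (φ u).1 ∈ cylinder (φ w).1 c := by
  obtain ⟨t, ht⟩ := exists_forall_mem_cylinder_eq_of_continuous
    (γ := fun u : MarkovShift A => fun i : Fin c => (φ u).1 i)
    (continuous_pi fun i => (continuous_apply _).comp (continuous_subtype_val.comp hφ)) w
  exact ⟨t, fun u hu i hi => congrFun (ht u hu) ⟨i, hi⟩⟩

lemma exists_forall_mem_cylinder_iterate_cocycleSum_eq {φ : MarkovShift A → MarkovShift B}
    {k l : MarkovShift A → ℕ} (hk : Continuous k) (hl : Continuous l)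
    (hrel : ∀ x, (shift B)^[k x] (φ (shift A x)) = (shift B)^[l x] (φ x))
    (y : MarkovShift A) (p : ℕ) : ∃ m, ∀ w : MarkovShift A, w.1 ∈ cylinder y.1 m →
      (shift B)^[cocycleSum A k p y] (φ ((shift A)^[p] w)) =
        (shift B)^[cocycleSum A l p y] (φ w) := by
  obtain ⟨m, hm⟩ := exists_forall_mem_cylinder_eq_of_continuous
    ((continuous_cocycleSum hk p).prodMk (continuous_cocycleSum hl p)) y
  refine ⟨m, fun w hw => ?_⟩
  obtain ⟨hkw, hlw⟩ := Prod.mk.inj (hm w hw)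
  rw [← hkw, ← hlw]
  exact Function.iterate_sum_of_iterate_eq hrel p w

lemma exists_forall_le_apply_eq_of_cocycleSum_le {φ : MarkovShift A → MarkovShift B}
    (hφ : Continuous φ) {k l : MarkovShift A → ℕ} (hk : Continuous k) (hl : Continuous l)
    (hrel : ∀ x, (shift B)^[k x] (φ (shift A x)) = (shift B)^[l x] (φ x))
    {y : MarkovShift A} {p : ℕ} (hp : 0 < p) (hy : Function.IsPeriodicPt (shift A) p y)
    (hLK : cocycleSum A l p y ≤ cocycleSum A k p y) :
    ∃ m T, ∀ u : MarkovShift A, u.1 ∈ cylinder y.1 m → ∀ q, T ≤ q → (φ u).1 q = (φ y).1 q := by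
  obtain ⟨e, hKe⟩ := Nat.exists_eq_add_of_le hLK
  obtain ⟨m, hm⟩ := exists_forall_mem_cylinder_iterate_cocycleSum_eq hk hl hrel y p
  rw [hKe] at hm
  set L := cocycleSum A l p y
  choose t ht using exists_forall_mem_cylinder_mem_cylinder hφ y
  refine ⟨m + 1, L + t (L + e) * e, fun u hu => ?_⟩
  let F n := splice y (n * p) u (apply_zero_eq_apply_mul_of_isPeriodicPt hy (hu 0 m.succ_pos) n)
  have hF : ∀ n, (shift B)^[L + e] (φ (F n)) = (shift B)^[L] (φ (F (n + 1))) := fun n => by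
    have := hm (F (n + 1)) (cylinder_anti _ m.le_succ (splice_mul_mem_cylinder hy hu _ _))
    rwa [show (shift A)^[p] (F (n + 1)) = F n from shift_iterate_splice_succ_mul hy n _ _] at this
  have hFy : (shift B)^[L + e] (φ y) = (shift B)^[L] (φ y) := by
    simpa only [hy.eq] using hm y (self_mem_cylinder _ _)
  have hF0 : F 0 = u := Subtype.ext <| funext fun q => by
    simp only [F, splice_apply, zero_mul, Nat.not_lt_zero, if_false, Nat.sub_zero]
  have hF_lim : ∀ c j, t c ≤ j → (φ (F j)).1 ∈ cylinder (φ y).1 c := fun c j hj =>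
    ht c (F j) (cylinder_anti _ (hj.trans (Nat.le_mul_of_pos_right j hp))
      (splice_mem_cylinder _ _ _ _))
  intro q hq
  rw [← hF0]
  refine eq_of_le_of_forall_shift_eq (ζ := fun j => (φ (F j)).1) t (fun j i => ?_) (fun j i => ?_)
    hF_lim q hq
  · simpa only [shift_iterate_apply] using
      congrArg (fun v => v.1 i) (Function.iterate_add_mul_eq_of_iterate_add_eq hF j)
  · simpa only [shift_iterate_apply] using congrArg (fun v => v.1 i)
      (Function.iterate_add_mul_eq_of_iterate_add_eq (z := fun _ => φ y) (fun _ => hFy) j)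

end MarkovShift

theorem cocycle_sum_pos_along_period_general {N M : ℕ}
    (A : Matrix (Fin N) (Fin N) ℕ) (B : Matrix (Fin M) (Fin M) ℕ)
    (hA : IsIrredNonPerm A)
    (h : ↥(MarkovShift A) ≃ₜ ↥(MarkovShift B))
    (k₁ l₁ : ↥(MarkovShift A) → ℕ)
    (hw : ∃ k₂ l₂, COEWitness A B h k₁ l₁ k₂ l₂)
    (x : ↥(MarkovShift A)) (r s : ℕ) (hrs : s < r)
    (hper : (shift A)^[r] x = (shift A)^[s] x) :
    0 < ∑ i ∈ Finset.range (r - s),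
        ((l₁ ((shift A)^[s + i] x) : ℤ) - (k₁ ((shift A)^[s + i] x) : ℤ)) := by
  obtain ⟨-, -, hk, hl, -, -, hrel, -⟩ := hw
  set y := (shift A)^[s] x
  have hy : Function.IsPeriodicPt (shift A) (r - s) y := by
    rw [Function.IsPeriodicPt, Function.IsFixedPt, ← Function.iterate_add_apply,
      Nat.sub_add_cancel hrs.le, hper]
  have hsum : ∑ i ∈ Finset.range (r - s),
      ((l₁ ((shift A)^[s + i] x) : ℤ) - (k₁ ((shift A)^[s + i] x) : ℤ)) =
      (cocycleSum A l₁ (r - s) y : ℤ) - cocycleSum A k₁ (r - s) y := by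
    simp only [cocycleSum, Nat.cast_sum, ← Finset.sum_sub_distrib, y,
      ← Function.iterate_add_apply, add_comm s]
  rw [hsum, sub_pos, Nat.cast_lt]
  by_contra! hLK
  obtain ⟨m, T, htail⟩ := MarkovShift.exists_forall_le_apply_eq_of_cocycleSum_le h.continuous
    hk hl hrel (Nat.sub_pos_of_lt hrs) hy hLK
  refine (MarkovShift.infinite_setOf_mem_cylinder hA y m).not_finite <|
    Set.Finite.of_finite_image ?_ h.injective.injOn
  refine ((finite_setOf_forall_le_eq (h y).1 T).preimage Subtype.val_injective.injOn).subset ?_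
  rintro _ ⟨u, hu, rfl⟩
  exact htail u hu

/-- the cocycle sum along an eventual period is positive. -/
theorem cocycle_sum_pos_along_period {N M : ℕ}
    (A : Matrix (Fin N) (Fin N) ℕ) (B : Matrix (Fin M) (Fin M) ℕ)
    (hA : IsIrredNonPerm A) (hB : IsIrredNonPerm B)
    (h : ↥(MarkovShift A) ≃ₜ ↥(MarkovShift B))
    (k₁ l₁ : ↥(MarkovShift A) → ℕ)
    (hw : ∃ k₂ l₂, COEWitness A B h k₁ l₁ k₂ l₂)
    (x : ↥(MarkovShift A)) (r s : ℕ) (hrs : s < r)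
    (hper : (shift A)^[r] x = (shift A)^[s] x) :
    0 < ∑ i ∈ Finset.range (r - s),
        ((l₁ ((shift A)^[s + i] x) : ℤ) - (k₁ ((shift A)^[s + i] x) : ℤ)) :=
  cocycle_sum_pos_along_period_general A B hA h k₁ l₁ hw x r s hrs hper
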